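/- With Γ and ξ = (s,it,0) as above, for all α ∈ Γ one has |α| / |α·α + 2ξ·α| ≤ (R_0/(πt))·( |s| + sqrt(s^2 + πt/R_0) ). -/

import Mathlib

open Finset

/-- For `α` in the shifted lattice `Γ` and `ξ = (s, it, 0)` with `t > 0`,
`|α| / |α·α + 2ξ·α| ≤ (R₀/(πt)) (|s| + √(s² + πt/R₀))`. -/
theorem faddeev_symbol_gradient_bound (R₀ s t : ℝ) (hR₀ : 0 < R₀) (ht : 0 < t)
    (α : Fin 3 → ℝ)
    (h1 : ∃ n : ℤ, R₀ / Real.pi * α 0 = n)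
    (h2 : ∃ n : ℤ, R₀ / Real.pi * α 1 - 1 / 2 = n)
    (h3 : ∃ n : ℤ, R₀ / Real.pi * α 2 = n) :
    Real.sqrt (∑ i, α i ^ 2) /
        ‖(∑ i, (α i : ℂ) * α i) + 2 * ((s : ℂ) * α 0 + Complex.I * t * α 1)‖ ≤
      R₀ / (Real.pi * t) * (|s| + Real.sqrt (s ^ 2 + Real.pi * t / R₀)) := by
  have hpi := Real.pi_pos
  set D : ℂ := (∑ i, (α i : ℂ) * α i) + 2 * ((s : ℂ) * α 0 + Complex.I * t * α 1) with hDdef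
  set r : ℝ := Real.sqrt (∑ i, α i ^ 2) with hrdef
  set c : ℝ := Real.pi * t / R₀ with hcdef
  have hc : 0 < c := by positivity
  -- real and imaginary parts of D
  have hre : D.re = (∑ i, α i ^ 2) + 2 * s * α 0 := by
    simp [hDdef, Fin.sum_univ_three]; ring
  have him : D.im = 2 * t * α 1 := by
    simp [hDdef, Fin.sum_univ_three]; ring
  -- lower bound on |α 1|
  obtain ⟨n, hn⟩ := h2
  have hα1 : Real.pi / (2 * R₀) ≤ |α 1| := by
    have hα1v : α 1 = ((n : ℝ) + 1 / 2) * (Real.pi / R₀) := by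
      field_simp at hn ⊢
      nlinarith [hn]
    have hhalf : (1 : ℝ) / 2 ≤ |(n : ℝ) + 1 / 2| := by
      rcases le_or_gt 0 n with h | h
      · have : (0 : ℝ) ≤ (n : ℝ) := by exact_mod_cast h
        rw [abs_of_nonneg (by linarith)]; linarith
      · have hn1 : n ≤ -1 := by omega
        have : (n : ℝ) ≤ -1 := by exact_mod_cast hn1
        rw [abs_of_nonpos (by linarith)]; linarith
    rw [hα1v, abs_mul, abs_of_nonneg (by positivity : (0:ℝ) ≤ Real.pi / R₀)]
    calc Real.pi / (2 * R₀) = (1/2) * (Real.pi / R₀) := by ring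
    _ ≤ |(n : ℝ) + 1 / 2| * (Real.pi / R₀) := by
        apply mul_le_mul_of_nonneg_right hhalf; positivity
  set A : ℝ := ‖D‖ with hAdef
  have hAc : c ≤ A := by
    have h1 : |D.im| ≤ A := Complex.abs_im_le_norm D
    rw [him, abs_mul, abs_of_nonneg (by positivity : (0:ℝ) ≤ 2 * t)] at h1
    have : c = 2 * t * (Real.pi / (2 * R₀)) := by
      rw [hcdef]; field_simp
    nlinarith [mul_le_mul_of_nonneg_left hα1 (by positivity : (0:ℝ) ≤ 2 * t)]
  have hApos : 0 < A := lt_of_lt_of_le hc hAc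
  have hr0 : 0 ≤ r := Real.sqrt_nonneg _
  have hsum : 0 ≤ ∑ i, α i ^ 2 := by positivity
  have hr2 : r ^ 2 = ∑ i, α i ^ 2 := Real.sq_sqrt hsum
  have hα0r : |α 0| ≤ r := by
    rw [hrdef, ← Real.sqrt_sq_eq_abs]
    apply Real.sqrt_le_sqrt
    have : α 0 ^ 2 ≤ ∑ i, α i ^ 2 := by
      rw [Fin.sum_univ_three]; nlinarith [sq_nonneg (α 1), sq_nonneg (α 2)]
    linarith
  have hAre : r ^ 2 - 2 * |s| * r ≤ A := by
    have h1 : |D.re| ≤ A := Complex.abs_re_le_norm D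
    rw [hre] at h1
    have h2 : r ^ 2 + 2 * s * α 0 ≤ |(∑ i, α i ^ 2) + 2 * s * α 0| := by
      rw [hr2]; exact le_abs_self _
    have h3 : -(2 * |s| * r) ≤ 2 * s * α 0 := by
      have := abs_mul (2 * s) (α 0)
      have h4 : |2 * s * α 0| ≤ 2 * |s| * r := by
        rw [abs_mul, abs_mul, abs_two]
        apply mul_le_mul_of_nonneg_left hα0r (by positivity)
      nlinarith [neg_abs_le (2 * s * α 0)]
    linarith
  -- k = sqrt(s^2 + c)
  set k : ℝ := Real.sqrt (s ^ 2 + c) with hkdef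
  have hk0 : 0 ≤ k := Real.sqrt_nonneg _
  have hk2 : k ^ 2 = s ^ 2 + c := Real.sq_sqrt (by positivity)
  have hks : |s| ≤ k := by
    rw [hkdef, ← Real.sqrt_sq_eq_abs]
    exact Real.sqrt_le_sqrt (by linarith)
  -- goal reduces to r * c ≤ (|s| + k) * A
  have key : r * c ≤ (|s| + k) * A := by
    rcases le_or_gt r (|s| + k) with h | h
    · have h1 : r * c ≤ (|s| + k) * c :=
        mul_le_mul_of_nonneg_right h hc.le
      have h2 : (|s| + k) * c ≤ (|s| + k) * A :=
        mul_le_mul_of_nonneg_left hAc (by positivity)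
      linarith
    · have h5 : 0 ≤ r * ((|s| + k) * (r - |s| - k)) :=
        mul_nonneg hr0 (mul_nonneg (by positivity) (by linarith))
      have h6 : (|s| + k) * (r ^ 2 - 2 * |s| * r) ≤ (|s| + k) * A :=
        mul_le_mul_of_nonneg_left hAre (by positivity)
      have h8 : (|s| + k) * (r ^ 2 - 2 * |s| * r)
          = r * ((|s| + k) * (r - |s| - k)) + r * c := by
        have hck : c = k ^ 2 - |s| ^ 2 := by rw [sq_abs]; linarith
        rw [hck]; ring
      linarith
  rw [div_le_iff₀ hApos]
  have hRc : R₀ / (Real.pi * t) = 1 / c := by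
    rw [hcdef]; field_simp
  rw [hRc]
  calc r ≤ (|s| + k) * A / c := by rw [le_div_iff₀ hc]; linarith [key]
  _ = 1 / c * (|s| + k) * A := by ring
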